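/- For real numbers λ₁,λ₂,λ₃, the two 9×9 matrices I₃ ⊗ I₃ + (3/2)·(λ₁·J₁⊗J₁ + λ₂·J₂⊗J₂ + λ₃·J₃⊗J₃) and I₃ ⊗ I₃ + (3/2)·(λ₁·J₁⊗J₁ − λ₂·J₂⊗J₂ + λ₃·J₃⊗J₃) are both positive semidefinite if and only if 4 − 9(λ₁² + λ₂² + λ₃²) + 27·λ₁λ₂λ₃ ≥ 0 and 4 − 9(λ₁² + λ₂² + λ₃²) − 27·λ₁λ₂λ₃ ≥ 0. -/

import Mathlib

/-
Both matrices are instances of `H(x, y, z) = 1 ⊗ 1 + x J₁ ⊗ J₁ + y J₂ ⊗ J₂ + z J₃ ⊗ J₃`, at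
`(x, y, z) = (3/2) (λ₁, ±λ₂, λ₃)`, and the two inequalities are `4 Δ(x, ±y, z) ≥ 0` with
`Δ(x, y, z) = 1 - x² - y² - z² - 2xyz`.

Necessity: `H` compressed to the span of `|00⟩ + |22⟩, |02⟩ + |20⟩, |11⟩` is the real matrix
`[[2(1+z), 0, x-y], [0, 2(1-z), x+y], [x-y, x+y, 1]]`, of determinant `4Δ`.
Sufficiency: for `|x|, |y|, |z| ≤ 1` and `Δ ≥ 0` the quadratic form of `H`, multiplied by
`2(1 - z²)`, is an explicit sum of squares with nonnegative weights; at `z = ±1`, `Δ ≥ 0` forces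
`y = ∓x` and a simpler decomposition applies. The bounds on `x, y, z` come from
`Δ(x, y, z) + Δ(x, -y, z) = 2(1 - x² - y² - z²)`.
-/

open Matrix Kronecker
open scoped ComplexOrder

/-- The spin-1 angular momentum matrix J₁. -/
noncomputable def spinOneJ1 : Matrix (Fin 3) (Fin 3) ℂ :=
  ((1 / Real.sqrt 2 : ℝ) : ℂ) • !![0, 1, 0; 1, 0, 1; 0, 1, 0]

/-- The spin-1 angular momentum matrix J₂. -/
noncomputable def spinOneJ2 : Matrix (Fin 3) (Fin 3) ℂ :=
  ((1 / Real.sqrt 2 : ℝ) : ℂ) • !![0, -Complex.I, 0; Complex.I, 0, -Complex.I; 0, Complex.I, 0]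

/-- The spin-1 angular momentum matrix J₃. -/
def spinOneJ3 : Matrix (Fin 3) (Fin 3) ℂ := !![1, 0, 0; 0, 0, 0; 0, 0, -1]

open scoped ComplexConjugate

theorem Matrix.IsHermitian.kronecker {m n R : Type*} [CommRing R] [StarRing R]
    {A : Matrix m m R} {B : Matrix n n R} (hA : A.IsHermitian) (hB : B.IsHermitian) :
    (A ⊗ₖ B).IsHermitian :=
  (conjTranspose_kronecker A B).trans (by rw [hA.eq, hB.eq])

theorem Matrix.smul_kronecker_smul {l m n p R : Type*} [CommSemiring R] (c d : R)
    (A : Matrix l m R) (B : Matrix n p R) : (c • A) ⊗ₖ (d • B) = (c * d) • (A ⊗ₖ B) := by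
  rw [smul_kronecker, kronecker_smul, smul_smul]

theorem spinOneJ1_isHermitian : spinOneJ1.IsHermitian := by
  ext i j; fin_cases i <;> fin_cases j <;> simp [spinOneJ1]

theorem spinOneJ2_isHermitian : spinOneJ2.IsHermitian := by
  ext i j; fin_cases i <;> fin_cases j <;> simp [spinOneJ2]

theorem spinOneJ3_isHermitian : spinOneJ3.IsHermitian := by
  ext i j; fin_cases i <;> fin_cases j <;> simp [spinOneJ3]

theorem inv_sqrt_two_mul_self : ((1 / √2 : ℝ) : ℂ) * ((1 / √2 : ℝ) : ℂ) = 1 / 2 := by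
  rw [← Complex.ofReal_mul, div_mul_div_comm, one_mul, Real.mul_self_sqrt zero_le_two]
  norm_num

theorem spinOneJ1_kronecker_self : spinOneJ1 ⊗ₖ spinOneJ1 =
    (1 / 2 : ℂ) • (!![0, 1, 0; 1, 0, 1; 0, 1, 0] ⊗ₖ !![0, 1, 0; 1, 0, 1; 0, 1, 0]) := by
  rw [spinOneJ1, smul_kronecker_smul, inv_sqrt_two_mul_self]

theorem spinOneJ2_kronecker_self : spinOneJ2 ⊗ₖ spinOneJ2 =
    (1 / 2 : ℂ) • (!![0, -Complex.I, 0; Complex.I, 0, -Complex.I; 0, Complex.I, 0] ⊗ₖ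
      !![0, -Complex.I, 0; Complex.I, 0, -Complex.I; 0, Complex.I, 0]) := by
  rw [spinOneJ2, smul_kronecker_smul, inv_sqrt_two_mul_self]

noncomputable def spinCoupling (x y z : ℝ) : Matrix (Fin 3 × Fin 3) (Fin 3 × Fin 3) ℂ :=
  1 ⊗ₖ 1 + (x : ℂ) • (spinOneJ1 ⊗ₖ spinOneJ1) + (y : ℂ) • (spinOneJ2 ⊗ₖ spinOneJ2) +
    (z : ℂ) • (spinOneJ3 ⊗ₖ spinOneJ3)

theorem isHermitian_spinCoupling (x y z : ℝ) : (spinCoupling x y z).IsHermitian := by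
  have real_smul (r : ℝ) {M : Matrix (Fin 3 × Fin 3) (Fin 3 × Fin 3) ℂ} (hM : M.IsHermitian) :
      ((r : ℂ) • M).IsHermitian := IsSelfAdjoint.smul (Complex.conj_ofReal r) hM
  exact ((((isHermitian_one.kronecker isHermitian_one).add
    (real_smul x (spinOneJ1_isHermitian.kronecker spinOneJ1_isHermitian))).add
    (real_smul y (spinOneJ2_isHermitian.kronecker spinOneJ2_isHermitian))).add
    (real_smul z (spinOneJ3_isHermitian.kronecker spinOneJ3_isHermitian)))

theorem one_kronecker_one_add_smul_eq_spinCoupling (t x y z : ℝ) :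
    (1 : Matrix (Fin 3) (Fin 3) ℂ) ⊗ₖ (1 : Matrix (Fin 3) (Fin 3) ℂ) +
        (t : ℂ) • ((x : ℂ) • (spinOneJ1 ⊗ₖ spinOneJ1) + (y : ℂ) • (spinOneJ2 ⊗ₖ spinOneJ2) +
          (z : ℂ) • (spinOneJ3 ⊗ₖ spinOneJ3)) =
      spinCoupling (t * x) (t * y) (t * z) := by
  simp only [spinCoupling, smul_add, smul_smul, Complex.ofReal_mul, add_assoc]

noncomputable def couplingForm (x y z : ℝ) (v : Fin 3 × Fin 3 → ℂ) : ℂ :=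
  (1 + z : ℝ) * (conj (v (0, 0)) * v (0, 0) + conj (v (2, 2)) * v (2, 2)) +
  (1 - z : ℝ) * (conj (v (0, 2)) * v (0, 2) + conj (v (2, 0)) * v (2, 0)) +
  (conj (v (0, 1)) * v (0, 1) + conj (v (1, 0)) * v (1, 0) + conj (v (1, 2)) * v (1, 2) +
    conj (v (2, 1)) * v (2, 1) + conj (v (1, 1)) * v (1, 1)) +
  ((x + y) / 2 : ℝ) * (conj (v (0, 1)) * v (1, 0) + conj (v (1, 0)) * v (0, 1) +
    conj (v (1, 2)) * v (2, 1) + conj (v (2, 1)) * v (1, 2) +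
    conj (v (0, 2)) * v (1, 1) + conj (v (1, 1)) * v (0, 2) +
    conj (v (2, 0)) * v (1, 1) + conj (v (1, 1)) * v (2, 0)) +
  ((x - y) / 2 : ℝ) * (conj (v (0, 1)) * v (1, 2) + conj (v (1, 2)) * v (0, 1) +
    conj (v (1, 0)) * v (2, 1) + conj (v (2, 1)) * v (1, 0) +
    conj (v (0, 0)) * v (1, 1) + conj (v (1, 1)) * v (0, 0) +
    conj (v (2, 2)) * v (1, 1) + conj (v (1, 1)) * v (2, 2))

theorem dotProduct_mulVec_spinCoupling (x y z : ℝ) (v : Fin 3 × Fin 3 → ℂ) :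
    star v ⬝ᵥ spinCoupling x y z *ᵥ v = couplingForm x y z v := by
  rw [spinCoupling, spinOneJ1_kronecker_self, spinOneJ2_kronecker_self]
  simp only [dotProduct, mulVec, one_div, Complex.coe_smul, spinOneJ3,
    Matrix.add_apply, one_apply, Matrix.smul_apply, kroneckerMap_apply, of_apply, cons_val',
    cons_val_fin_one, smul_eq_mul, Complex.real_smul, Fintype.sum_prod_type, Fin.sum_univ_three,
    Fin.isValue, cons_val_zero, cons_val_one, cons_val, add_zero,
    zero_ne_one, ↓reduceIte, zero_add, mul_neg, Fin.reduceEq, one_ne_zero, ite_mul,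
    one_mul, neg_zero, neg_mul, Complex.I_mul_I, neg_neg, couplingForm, Complex.ofReal_add,
    Complex.ofReal_one, Complex.ofReal_sub, Complex.ofReal_div, Complex.ofReal_ofNat, Pi.star_apply,
    RCLike.star_def, mul_zero, mul_one, zero_mul]
  ring

def evenSymmetricFrame : Matrix (Fin 3 × Fin 3) (Fin 3) ℂ :=
  of fun p k => ![!![1, 0, 0; 0, 0, 0; 0, 0, 1], !![0, 0, 1; 0, 0, 0; 1, 0, 0],
    !![0, 0, 0; 0, 1, 0; 0, 0, 0]] k p.1 p.2

theorem evenSymmetricFrame_compression (x y z : ℝ) :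
    evenSymmetricFrameᴴ * spinCoupling x y z * evenSymmetricFrame =
      (!![2 * (1 + z), 0, x - y; 0, 2 * (1 - z), x + y; x - y, x + y, 1] :
        Matrix (Fin 3) (Fin 3) ℝ).map (↑) := by
  rw [spinCoupling, spinOneJ1_kronecker_self, spinOneJ2_kronecker_self]
  ext i j
  fin_cases i <;> fin_cases j <;>
    simp only [evenSymmetricFrame, one_div, Complex.coe_smul, spinOneJ3,
      Fin.zero_eta, Fin.isValue, Fin.mk_one, Fin.reduceFinMk, mul_apply, conjTranspose_apply,
      of_apply, cons_val_zero, cons_val_one, cons_val, cons_val', cons_val_fin_one,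
      RCLike.star_def, Matrix.add_apply, one_apply, Matrix.smul_apply, kroneckerMap_apply,
      smul_eq_mul, Complex.real_smul, Fintype.sum_prod_type, Fin.sum_univ_three, map_one, one_mul,
      map_zero, add_zero, zero_add, Fin.reduceEq, ↓reduceIte,
      zero_ne_one, one_ne_zero, ite_mul, mul_neg, neg_zero, neg_mul, Complex.I_mul_I, neg_neg,
      map_apply, mul_zero, zero_mul, mul_one] <;> push_cast <;> ring

theorem det_nonneg_of_posSemidef_spinCoupling {x y z : ℝ} (h : (spinCoupling x y z).PosSemidef) :
    0 ≤ 1 - x ^ 2 - y ^ 2 - z ^ 2 - 2 * x * y * z := by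
  have hdet := (h.conjTranspose_mul_mul_same evenSymmetricFrame).det_nonneg
  rw [evenSymmetricFrame_compression] at hdet
  have hdet_real := Complex.zero_le_real.mp (hdet.trans_eq (Complex.ofRealHom.map_det _).symm)
  rw [det_fin_three] at hdet_real
  simp only [of_apply, cons_val', cons_val_zero, cons_val_one, cons_val_two, empty_val',
    cons_val_fin_one, head_cons, tail_cons, head_fin_const] at hdet_real
  linarith

noncomputable def weightedNormSq (r : ℝ) (w : ℂ) : ℂ := r * (conj w * w)

theorem weightedNormSq_nonneg {r : ℝ} (hr : 0 ≤ r) (w : ℂ) : 0 ≤ weightedNormSq r w :=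
  mul_nonneg (Complex.zero_le_real.mpr hr) (star_mul_self_nonneg w)

theorem couplingForm_sos (x y z : ℝ) (v : Fin 3 × Fin 3 → ℂ) :
    ((2 * (1 - z ^ 2) : ℝ) : ℂ) * couplingForm x y z v =
      weightedNormSq ((1 - z ^ 2) * (1 + x) / 2) (v (0, 1) + v (1, 0) + v (1, 2) + v (2, 1)) +
      weightedNormSq ((1 - z ^ 2) * (1 + y) / 2) (v (0, 1) + v (1, 0) - v (1, 2) - v (2, 1)) +
      weightedNormSq ((1 - z ^ 2) * (1 - y) / 2) (v (0, 1) - v (1, 0) + v (1, 2) - v (2, 1)) +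
      weightedNormSq ((1 - z ^ 2) * (1 - x) / 2) (v (0, 1) - v (1, 0) - v (1, 2) + v (2, 1)) +
      weightedNormSq ((1 - z ^ 2) * (1 + z)) (v (0, 0) - v (2, 2)) +
      weightedNormSq ((1 - z ^ 2) * (1 - z)) (v (0, 2) - v (2, 0)) +
      weightedNormSq (1 - z) ((1 + z : ℝ) * (v (0, 0) + v (2, 2)) + (x - y : ℝ) * v (1, 1)) +
      weightedNormSq (1 + z) ((1 - z : ℝ) * (v (0, 2) + v (2, 0)) + (x + y : ℝ) * v (1, 1)) +
      weightedNormSq (2 * (1 - x ^ 2 - y ^ 2 - z ^ 2 - 2 * x * y * z)) (v (1, 1)) := by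
  simp only [couplingForm, weightedNormSq, map_add, map_sub, map_mul, Complex.conj_ofReal]
  push_cast
  ring

theorem couplingForm_sos_of_z_eq_one (x : ℝ) (v : Fin 3 × Fin 3 → ℂ) :
    couplingForm x (-x) 1 v =
      weightedNormSq ((1 + x) / 2) (v (0, 1) + v (1, 2)) +
      weightedNormSq ((1 + x) / 2) (v (1, 0) + v (2, 1)) +
      weightedNormSq ((1 - x) / 2) (v (0, 1) - v (1, 2)) +
      weightedNormSq ((1 - x) / 2) (v (1, 0) - v (2, 1)) +
      weightedNormSq 1 (v (0, 0) - v (2, 2)) +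
      weightedNormSq 1 (v (0, 0) + v (2, 2) + x * v (1, 1)) +
      weightedNormSq (1 - x ^ 2) (v (1, 1)) := by
  simp only [couplingForm, weightedNormSq, map_add, map_sub, map_mul, Complex.conj_ofReal]
  push_cast
  ring

theorem couplingForm_sos_of_z_eq_neg_one (x : ℝ) (v : Fin 3 × Fin 3 → ℂ) :
    couplingForm x x (-1) v =
      weightedNormSq ((1 + x) / 2) (v (0, 1) + v (1, 0)) +
      weightedNormSq ((1 + x) / 2) (v (1, 2) + v (2, 1)) +
      weightedNormSq ((1 - x) / 2) (v (0, 1) - v (1, 0)) +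
      weightedNormSq ((1 - x) / 2) (v (1, 2) - v (2, 1)) +
      weightedNormSq 1 (v (0, 2) - v (2, 0)) +
      weightedNormSq 1 (v (0, 2) + v (2, 0) + x * v (1, 1)) +
      weightedNormSq (1 - x ^ 2) (v (1, 1)) := by
  simp only [couplingForm, weightedNormSq, map_add, map_sub, map_mul, Complex.conj_ofReal]
  push_cast
  ring

theorem posSemidef_spinCoupling {x y z : ℝ} (hx : |x| ≤ 1) (hy : |y| ≤ 1) (hz : |z| ≤ 1)
    (hD : 0 ≤ 1 - x ^ 2 - y ^ 2 - z ^ 2 - 2 * x * y * z) : (spinCoupling x y z).PosSemidef := by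
  obtain ⟨hx₁, hx₂⟩ := abs_le.mp hx
  obtain ⟨hy₁, hy₂⟩ := abs_le.mp hy
  obtain ⟨hz₁, hz₂⟩ := abs_le.mp hz
  refine .of_dotProduct_mulVec_nonneg (isHermitian_spinCoupling x y z) fun v => ?_
  rw [dotProduct_mulVec_spinCoupling]
  rcases hz₂.eq_or_lt with rfl | hz_lt
  · obtain rfl : y = -x := by nlinarith
    rw [couplingForm_sos_of_z_eq_one]
    repeat' apply add_nonneg
    all_goals exact weightedNormSq_nonneg (by nlinarith) _
  rcases hz₁.eq_or_lt with rfl | hz_gt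
  · obtain rfl : y = x := by nlinarith
    rw [couplingForm_sos_of_z_eq_neg_one]
    repeat' apply add_nonneg
    all_goals exact weightedNormSq_nonneg (by nlinarith) _
  have hz_sq : 0 < 1 - z ^ 2 := by nlinarith
  have hpos : (0 : ℂ) < ((2 * (1 - z ^ 2) : ℝ) : ℂ) := Complex.zero_lt_real.mpr (by linarith)
  refine le_of_mul_le_mul_left ?_ hpos
  rw [mul_zero, couplingForm_sos]
  repeat' apply add_nonneg
  all_goals exact weightedNormSq_nonneg (by nlinarith) _

theorem qutrit_ppt_iff (l1 l2 l3 : ℝ) :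
    (((1 : Matrix (Fin 3) (Fin 3) ℂ) ⊗ₖ (1 : Matrix (Fin 3) (Fin 3) ℂ) +
        ((3 / 2 : ℝ) : ℂ) • ((l1 : ℂ) • (spinOneJ1 ⊗ₖ spinOneJ1) +
          (l2 : ℂ) • (spinOneJ2 ⊗ₖ spinOneJ2) +
          (l3 : ℂ) • (spinOneJ3 ⊗ₖ spinOneJ3))).PosSemidef ∧
      ((1 : Matrix (Fin 3) (Fin 3) ℂ) ⊗ₖ (1 : Matrix (Fin 3) (Fin 3) ℂ) +
        ((3 / 2 : ℝ) : ℂ) • ((l1 : ℂ) • (spinOneJ1 ⊗ₖ spinOneJ1) -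
          (l2 : ℂ) • (spinOneJ2 ⊗ₖ spinOneJ2) +
          (l3 : ℂ) • (spinOneJ3 ⊗ₖ spinOneJ3))).PosSemidef) ↔
    (4 - 9 * (l1 ^ 2 + l2 ^ 2 + l3 ^ 2) + 27 * (l1 * l2 * l3) ≥ 0 ∧
      4 - 9 * (l1 ^ 2 + l2 ^ 2 + l3 ^ 2) - 27 * (l1 * l2 * l3) ≥ 0) := by
  rw [sub_eq_add_neg, ← neg_smul, ← Complex.ofReal_neg,
    one_kronecker_one_add_smul_eq_spinCoupling, one_kronecker_one_add_smul_eq_spinCoupling]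
  constructor
  · rintro ⟨h_plus, h_minus⟩
    have hD_plus := det_nonneg_of_posSemidef_spinCoupling h_plus
    have hD_minus := det_nonneg_of_posSemidef_spinCoupling h_minus
    constructor <;> linarith
  · rintro ⟨h₁, h₂⟩
    have h_sum : (3 / 2 * l1) ^ 2 + (3 / 2 * l2) ^ 2 + (3 / 2 * l3) ^ 2 ≤ 1 := by linarith
    have hx : |3 / 2 * l1| ≤ 1 := (sq_le_one_iff_abs_le_one _).mp (by nlinarith)
    have hy : |3 / 2 * l2| ≤ 1 := (sq_le_one_iff_abs_le_one _).mp (by nlinarith)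
    have hz : |3 / 2 * l3| ≤ 1 := (sq_le_one_iff_abs_le_one _).mp (by nlinarith)
    have hy' : |3 / 2 * -l2| ≤ 1 := by rwa [mul_neg, abs_neg]
    exact ⟨posSemidef_spinCoupling hx hy hz (by linarith),
      posSemidef_spinCoupling hx hy' hz (by linarith)⟩
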